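/- arXiv:2002.05261 — 6 statements merged into one kernel-verified Lean document; each statement's English description precedes it below -/
import Mathlib

section
/- Suppose p is reversible. For any cycle c = (a_1,…,a_s), the cycle vector w_c is a fixed point of the Szegedy evolution: U w_c = w_c. -/
open scoped BigOperators

/-- A symmetric directed graph: arcs with origin/terminus maps and an
inversion involution; every vertex has a finite nonempty set of outgoing
arcs; the graph is connected. -/
structure SymDigraph where
  V : Type
  A : Type
  o : A → V
  t : A → V
  bar : A → A
  bar_inv : Function.Involutive bar
  o_bar : ∀ a, o (bar a) = t a
  t_bar : ∀ a, t (bar a) = o a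
  out_fin : ∀ u : V, {a : A | o a = u}.Finite
  out_ne : ∀ u : V, {a : A | o a = u}.Nonempty
  connected : ∀ u v : V, Relation.ReflTransGen (fun x y => ∃ a, o a = x ∧ t a = y) u v

/-- `p` is a transition function of a random walk: `0 < p a ≤ 1` and the
outgoing probabilities at every vertex sum to `1`. -/
def IsTransition (G : SymDigraph) (p : G.A → ℝ) : Prop :=
  (∀ a, 0 < p a ∧ p a ≤ 1) ∧
  ∀ u : G.V, ∑ᶠ a ∈ {a : G.A | G.o a = u}, p a = 1

/-- The Szegedy evolution:
`(UΨ)(a) = 2√(p a) Σ_{b : t b = o a} √(p b̄) Ψ(b) − Ψ(ā)`. -/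
noncomputable def szegedy (G : SymDigraph) (p : G.A → ℝ) (Ψ : G.A → ℂ) : G.A → ℂ :=
  fun a =>
    2 * (Real.sqrt (p a) : ℂ) *
        (∑ᶠ b ∈ {b : G.A | G.t b = G.o a}, (Real.sqrt (p (G.bar b)) : ℂ) * Ψ b)
      - Ψ (G.bar a)

/-- `ρ_V(u) = Σ_{b : t b = u} √(p b̄) Ψ(b)`. -/
noncomputable def rhoV (G : SymDigraph) (p : G.A → ℝ) (Ψ : G.A → ℂ) (u : G.V) : ℂ :=
  ∑ᶠ b ∈ {b : G.A | G.t b = u}, (Real.sqrt (p (G.bar b)) : ℂ) * Ψ b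

/-- `ρ_E(|a|) = (Ψ(a) + Ψ(ā))/2`. -/
noncomputable def rhoE (G : SymDigraph) (Ψ : G.A → ℂ) (a : G.A) : ℂ :=
  (Ψ a + Ψ (G.bar a)) / 2

/-- Reversibility of `p` with reversible measure `m_V`; the detailed balance
condition `p(a) m_V(o a) = p(ā) m_V(t a)`. -/
def IsReversible (G : SymDigraph) (p : G.A → ℝ) (mV : G.V → ℝ) : Prop :=
  (∀ u, 0 < mV u) ∧ ∀ a, p a * mV (G.o a) = p (G.bar a) * mV (G.t a)

/-- The edge measure `m_E(|a|) = p(a) m_V(o a)`. -/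
def mEdge (G : SymDigraph) (p : G.A → ℝ) (mV : G.V → ℝ) (a : G.A) : ℝ :=
  p a * mV (G.o a)

/-- The tailed graph `G̃`: a finite internal graph `G0 = (V0, A0)` together
with `r ≥ 1` semi-infinite tails.  Tail `j` has vertices `tailV j 0,
tailV j 1, …` (with root `tailV j 0 = o(P_j) ∈ V0`, all other tail vertices
outside `V0`) and inward arcs `tailA j k` going from `tailV j (k+1)` to
`tailV j k`; `e_j = tailA j 0`.  Outward arcs are the `bar (tailA j k)`. -/
structure TailedGraph extends SymDigraph where
  r : ℕ
  r_pos : 0 < r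
  V0 : Set V
  A0 : Set A
  V0_fin : V0.Finite
  A0_fin : A0.Finite
  A0_bar : ∀ a ∈ A0, bar a ∈ A0
  A0_ends : ∀ a ∈ A0, o a ∈ V0 ∧ t a ∈ V0
  tailV : Fin r → ℕ → V
  tailA : Fin r → ℕ → A
  tailA_o : ∀ j k, o (tailA j k) = tailV j (k + 1)
  tailA_t : ∀ j k, t (tailA j k) = tailV j k
  tailV_root : ∀ j, tailV j 0 ∈ V0
  tailV_notin : ∀ j k, tailV j (k + 1) ∉ V0
  tailV_inj : ∀ j k j' k', tailV j (k + 1) = tailV j' (k' + 1) → j = j' ∧ k = k'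
  tailA_nin : ∀ j k, tailA j k ∉ A0
  arcs_cover : ∀ a : A, a ∈ A0 ∨ ∃ j k, a = tailA j k ∨ a = bar (tailA j k)
  verts_cover : ∀ u : V, u ∈ V0 ∨ ∃ j k, u = tailV j (k + 1)

/-- A transition function on the tailed graph: additionally `p = 1/2` on all
tail arcs except possibly the arcs leaving `o(P_j)` into tail `j`
(that is, except the `bar (tailA j 0)`). -/
def TailTransition (G : TailedGraph) (p : G.A → ℝ) : Prop :=
  IsTransition G.toSymDigraph p ∧
  (∀ j k, p (G.tailA j k) = 1 / 2) ∧
  ∀ j k, p (G.bar (G.tailA j (k + 1))) = 1 / 2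

/-- `Ψ` is a stationary state with boundary data `α β : ℂ^r`:
`UΨ = Ψ`, `Ψ = α_j` on the inward arcs of tail `j` and `Ψ = β_j` on the
outward arcs of tail `j`. -/
def TailedIsStationary (G : TailedGraph) (p : G.A → ℝ) (Ψ : G.A → ℂ)
    (α β : Fin G.r → ℂ) : Prop :=
  szegedy G.toSymDigraph p Ψ = Ψ ∧
  (∀ j k, Ψ (G.tailA j k) = α j) ∧
  ∀ j k, Ψ (G.bar (G.tailA j k)) = β j

/-- `m(δG0) = Σ_{j=1}^r m_E(|e_j|)`. -/
def mDelta (G : TailedGraph) (p : G.A → ℝ) (mV : G.V → ℝ) : ℝ :=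
  ∑ j : Fin G.r, mEdge G.toSymDigraph p mV (G.tailA j 0)

/-- `⟨m_{δE}, α⟩ = Σ_{j=1}^r √(m_E(|e_j|)/m(δG0)) · α_j`. -/
noncomputable def bdryInner (G : TailedGraph) (p : G.A → ℝ) (mV : G.V → ℝ)
    (α : Fin G.r → ℂ) : ℂ :=
  ∑ j : Fin G.r,
    (Real.sqrt (mEdge G.toSymDigraph p mV (G.tailA j 0) / mDelta G p mV) : ℂ) * α j

/-- The current
`j(a) = √(m_E(|a|)) Ψ(a) − (m_E(|a|)/√(m(δG0))) ⟨m_{δE}, α⟩`. -/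
noncomputable def current (G : TailedGraph) (p : G.A → ℝ) (mV : G.V → ℝ)
    (α : Fin G.r → ℂ) (Ψ : G.A → ℂ) (a : G.A) : ℂ :=
  (Real.sqrt (mEdge G.toSymDigraph p mV a) : ℂ) * Ψ a
    - ((mEdge G.toSymDigraph p mV a : ℝ) : ℂ)
        / (Real.sqrt (mDelta G p mV) : ℂ) * bdryInner G p mV α

/-- A cycle `(a_1, …, a_s)`: consecutive arcs concatenate (cyclically) and
the `2s` arcs `a_1, …, a_s, ā_1, …, ā_s` are pairwise distinct. -/
def IsCycle (G : SymDigraph) (s : ℕ) (c : Fin s → G.A) : Prop :=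
  0 < s ∧
  (∀ k : Fin s, G.t (c k) = G.o (c ⟨(k.val + 1) % s, Nat.mod_lt _ k.pos⟩)) ∧
  Function.Injective (Sum.elim c fun k => G.bar (c k))

open Classical in
/-- The cycle vector `w_c`: `1/√(m_E(|a_k|))` at `a_k`, `−1/√(m_E(|a_k|))`
at `ā_k`, and `0` elsewhere. -/
noncomputable def cycleVec (G : SymDigraph) (mE : G.A → ℝ) {s : ℕ}
    (c : Fin s → G.A) (a : G.A) : ℂ :=
  if ∃ k, a = c k then ((1 / Real.sqrt (mE a) : ℝ) : ℂ)
  else if ∃ k, a = G.bar (c k) then ((-(1 / Real.sqrt (mE a)) : ℝ) : ℂ)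
  else 0


/-- for a reversible walk, the cycle vector `w_c` of any cycle
`c` is a fixed point of the Szegedy evolution: `U w_c = w_c`. -/
theorem cycleVec_fixed (G : SymDigraph) (p : G.A → ℝ) (hp : IsTransition G p)
    (mV : G.V → ℝ) (hrev : IsReversible G p mV)
    (s : ℕ) (c : Fin s → G.A) (hc : IsCycle G s c) :
    szegedy G p (cycleVec G (mEdge G p mV) c) = cycleVec G (mEdge G p mV) c := by
  classical
  obtain ⟨hs, hcyc, hinj⟩ := hc
  haveI : NeZero s := ⟨hs.ne'⟩
  set mE := mEdge G p mV with hmE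
  set w := cycleVec G mE c with hw
  have hp0 : ∀ a, 0 < p a := fun a => (hp.1 a).1
  have hmV : ∀ u, 0 < mV u := hrev.1
  have hrev2 := hrev.2
  have hmE_pos : ∀ a, 0 < mE a := fun a => mul_pos (hp0 a) (hmV _)
  have hmE_bar : ∀ a, mE (G.bar a) = mE a := by
    intro a
    simp only [hmE, mEdge, G.o_bar]
    exact (hrev2 a).symm
  have hmE_rev : ∀ a, mE a = p (G.bar a) * mV (G.t a) := fun a => hrev2 a
  -- injectivity consequences
  have hcb : ∀ k k', c k ≠ G.bar (c k') := by
    intro k k' h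
    have h' : (Sum.elim c fun k => G.bar (c k)) (Sum.inl k)
        = (Sum.elim c fun k => G.bar (c k)) (Sum.inr k') := h
    exact absurd (hinj h') (by simp)
  -- values of w
  have hwc : ∀ k, w (c k) = ((1 / Real.sqrt (mE (c k)) : ℝ) : ℂ) := by
    intro k
    simp only [hw, cycleVec]
    rw [if_pos ⟨k, rfl⟩]
  have hwb : ∀ k, w (G.bar (c k)) = ((-(1 / Real.sqrt (mE (G.bar (c k)))) : ℝ) : ℂ) := by
    intro k
    simp only [hw, cycleVec]
    rw [if_neg, if_pos ⟨k, rfl⟩]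
    rintro ⟨k', hk'⟩
    exact hcb k' k hk'.symm
  have hw0 : ∀ a, (¬∃ k, a = c k) → (¬∃ k, a = G.bar (c k)) → w a = 0 := by
    intro a h1 h2
    simp only [hw, cycleVec]
    rw [if_neg h1, if_neg h2]
  have hwbar : ∀ a, w (G.bar a) = - w a := by
    intro a
    by_cases h1 : ∃ k, a = c k
    · obtain ⟨k, rfl⟩ := h1
      rw [hwc k, hwb k, hmE_bar]
      push_cast; ring
    · by_cases h2 : ∃ k, a = G.bar (c k)
      · obtain ⟨k, rfl⟩ := h2
        rw [G.bar_inv (c k), hwc k, hwb k, hmE_bar]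
        push_cast; ring
      · rw [hw0 a h1 h2, hw0 (G.bar a) ?_ ?_, neg_zero]
        · rintro ⟨k, hk⟩
          exact h2 ⟨k, by rw [← G.bar_inv a, hk]⟩
        · rintro ⟨k, hk⟩
          refine h1 ⟨k, ?_⟩
          have := congrArg G.bar hk
          rwa [G.bar_inv, G.bar_inv] at this
  -- value computations for the summand
  have hval1 : ∀ k, ((Real.sqrt (p (G.bar (c k))) : ℝ) : ℂ) * w (c k)
      = ((1 / Real.sqrt (mV (G.t (c k))) : ℝ) : ℂ) := by
    intro k
    rw [hwc k, ← Complex.ofReal_mul]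
    congr 1
    rw [hmE_rev (c k), Real.sqrt_mul (hp0 (G.bar (c k))).le]
    have h1 : Real.sqrt (p (G.bar (c k))) ≠ 0 :=
      Real.sqrt_ne_zero'.mpr (hp0 (G.bar (c k)))
    rw [one_div, mul_inv, ← mul_assoc, mul_inv_cancel₀ h1, one_mul, one_div]
  have hval2 : ∀ k, ((Real.sqrt (p (G.bar (G.bar (c k)))) : ℝ) : ℂ) * w (G.bar (c k))
      = ((-(1 / Real.sqrt (mV (G.o (c k)))) : ℝ) : ℂ) := by
    intro k
    rw [hwb k, G.bar_inv (c k), ← Complex.ofReal_mul]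
    congr 1
    rw [hmE_bar (c k)]
    have hme : mE (c k) = p (c k) * mV (G.o (c k)) := rfl
    have h1 : Real.sqrt (p (c k)) ≠ 0 := Real.sqrt_ne_zero'.mpr (hp0 (c k))
    rw [hme, Real.sqrt_mul (hp0 (c k)).le, mul_neg, one_div, mul_inv, ← mul_assoc,
      mul_inv_cancel₀ h1, one_mul, one_div]
  -- the key vanishing of the vertex sum
  have hrho : ∀ u : G.V, (∑ᶠ b ∈ {b : G.A | G.t b = u},
      ((Real.sqrt (p (G.bar b)) : ℝ) : ℂ) * w b) = 0 := by
    intro u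
    set h : G.A → ℂ := fun b => ((Real.sqrt (p (G.bar b)) : ℝ) : ℂ) * w b with hh
    set f : Fin s ⊕ Fin s → G.A := Sum.elim c fun k => G.bar (c k) with hf
    have hsupp : Function.support h ⊆ Set.range f := by
      intro b hb
      by_contra hr
      apply hb
      have h1 : ¬∃ k, b = c k := fun ⟨k, hk⟩ => hr ⟨Sum.inl k, hk.symm⟩
      have h2 : ¬∃ k, b = G.bar (c k) := fun ⟨k, hk⟩ => hr ⟨Sum.inr k, hk.symm⟩
      simp [hh, hw0 b h1 h2]
    set T : Finset G.A := (Finset.univ.filter fun x => G.t (f x) = u).image f with hT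
    have key : (∑ᶠ b ∈ {b : G.A | G.t b = u}, h b) = ∑ b ∈ T, h b := by
      apply finsum_mem_eq_sum_of_inter_support_eq
      ext b
      simp only [Set.mem_inter_iff, Set.mem_setOf_eq, hT, Finset.coe_image,
        Set.mem_image, Finset.mem_coe, Finset.mem_filter, Finset.mem_univ, true_and]
      constructor
      · rintro ⟨htb, hb⟩
        obtain ⟨x, rfl⟩ := hsupp hb
        exact ⟨⟨x, htb, rfl⟩, hb⟩
      · rintro ⟨⟨x, hx, rfl⟩, hb⟩
        exact ⟨hx, hb⟩
    rw [key, hT, Finset.sum_image (fun x _ y _ hxy => hinj hxy), Finset.sum_filter,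
      Fintype.sum_sum_type]
    simp only [hf, Sum.elim_inl, Sum.elim_inr]
    set v : ℂ := ((1 / Real.sqrt (mV u) : ℝ) : ℂ) with hv
    have e1 : (∑ k : Fin s, if G.t (c k) = u then h (c k) else 0)
        = ∑ k : Fin s, if G.t (c k) = u then v else 0 := by
      refine Finset.sum_congr rfl fun k _ => ?_
      split_ifs with hk
      · exact (hval1 k).trans (by rw [hk])
      · rfl
    have e2 : (∑ k : Fin s, if G.t (G.bar (c k)) = u then h (G.bar (c k)) else 0)
        = ∑ k : Fin s, if G.o (c k) = u then -v else 0 := by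
      refine Finset.sum_congr rfl fun k _ => ?_
      rw [G.t_bar]
      split_ifs with hk
      · refine (hval2 k).trans ?_
        rw [hk, hv]; push_cast; ring
      · rfl
    rw [e1, e2]
    have hidx : ∀ k : Fin s, (⟨(k.val + 1) % s, Nat.mod_lt _ k.pos⟩ : Fin s) = k + 1 := by
      intro k
      apply Fin.ext
      simp only [Fin.val_add, Fin.val_one']
      rw [Nat.add_mod, Nat.mod_eq_of_lt k.isLt]
    have hshift : ∀ k : Fin s, G.t (c k) = G.o (c (k + 1)) := by
      intro k
      have h := hcyc k
      rwa [hidx k] at h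
    have e3 : (∑ k : Fin s, if G.t (c k) = u then v else 0)
        = ∑ k : Fin s, if G.o (c k) = u then v else 0 := by
      rw [show (fun k : Fin s => if G.t (c k) = u then v else 0)
          = fun k : Fin s => if G.o (c (k + 1)) = u then v else 0 from
        funext fun k => by rw [hshift k]]
      exact Fintype.sum_equiv (Equiv.addRight (1 : Fin s)) _ _ fun k => rfl
    rw [e3, ← Finset.sum_add_distrib]
    apply Finset.sum_eq_zero
    intro k _
    split_ifs <;> ring
  -- conclude
  funext a
  show szegedy G p w a = w a
  rw [szegedy]
  rw [hrho (G.o a), hwbar a]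
  ring
end

section
/- (Kirchhoff's voltage law.) Suppose p is reversible and Ψ is a stationary state with boundary data α,β ∈ ℂ^r. Then for every cycle c = (a_1,…,a_s), ⟨w_c, Ψ⟩ = 2·Σ_{k=1}^s j(a_k)/m_E(|a_k|); in particular, Σ_{k=1}^s j(a_k)/m_E(|a_k|) = 0 if and only if Ψ is orthogonal to the cycle vector w_c. -/
open scoped BigOperators

/-- `Ψ` is a stationary state with boundary data `α β : ℂ^r`:
`UΨ = Ψ`, `Ψ = α_j` on the inward arcs of tail `j` and `Ψ = β_j` on the
outward arcs of tail `j`. -/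
def IsStationaryBdry (G : TailedGraph) (p : G.A → ℝ) (Ψ : G.A → ℂ)
    (α β : Fin G.r → ℂ) : Prop :=
  szegedy G.toSymDigraph p Ψ = Ψ ∧
  (∀ j k, Ψ (G.tailA j k) = α j) ∧
  ∀ j k, Ψ (G.bar (G.tailA j k)) = β j

section KVLaux
variable {G : TailedGraph} {p : G.A → ℝ} {mV : G.V → ℝ} {Ψ : G.A → ℂ} {α β : Fin G.r → ℂ}

lemma KVL.mE_pos (hp : TailTransition G p) (hrev : IsReversible G.toSymDigraph p mV)
    (a : G.A) : 0 < mEdge G.toSymDigraph p mV a :=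
  mul_pos (hp.1.1 a).1 (hrev.1 _)

lemma KVL.mE_bar (hrev : IsReversible G.toSymDigraph p mV) (a : G.A) :
    mEdge G.toSymDigraph p mV (G.bar a) = mEdge G.toSymDigraph p mV a := by
  unfold mEdge
  rw [G.o_bar, ← hrev.2]

lemma KVL.stat_sum (hΨ : IsStationaryBdry G p Ψ α β) (a : G.A) :
    Ψ a + Ψ (G.bar a)
      = 2 * (Real.sqrt (p a) : ℂ) * rhoV G.toSymDigraph p Ψ (G.o a) := by
  have h := congrFun hΨ.1 a
  unfold szegedy at h
  rw [← h]
  unfold rhoV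
  ring

lemma KVL.sqrt_mE (hp : TailTransition G p) (hrev : IsReversible G.toSymDigraph p mV) (a : G.A) :
    Real.sqrt (mEdge G.toSymDigraph p mV a)
      = Real.sqrt (p a) * Real.sqrt (mV (G.o a)) :=
  Real.sqrt_mul (le_of_lt (hp.1.1 a).1) _

end KVLaux
section KVLaux2
variable {G : TailedGraph} {p : G.A → ℝ} {mV : G.V → ℝ} {Ψ : G.A → ℂ} {α β : Fin G.r → ℂ}

/-- normalized vertex density -/
noncomputable def KVL.fC (G : TailedGraph) (p : G.A → ℝ) (mV : G.V → ℝ) (Ψ : G.A → ℂ)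
    (u : G.V) : ℂ :=
  rhoV G.toSymDigraph p Ψ u / (Real.sqrt (mV u) : ℂ)

lemma KVL.sqrt_mV_pos (hrev : IsReversible G.toSymDigraph p mV) (u : G.V) :
    0 < Real.sqrt (mV u) := Real.sqrt_pos.2 (hrev.1 u)

lemma KVL.rhoV_eq (hrev : IsReversible G.toSymDigraph p mV) (u : G.V) :
    rhoV G.toSymDigraph p Ψ u = (Real.sqrt (mV u) : ℂ) * KVL.fC G p mV Ψ u := by
  have h : (Real.sqrt (mV u) : ℂ) ≠ 0 := by
    exact_mod_cast (KVL.sqrt_mV_pos hrev u).ne'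
  unfold KVL.fC
  field_simp

lemma KVL.f_step (hp : TailTransition G p) (hrev : IsReversible G.toSymDigraph p mV)
    (hΨ : IsStationaryBdry G p Ψ α β) (a : G.A) :
    KVL.fC G p mV Ψ (G.o a) = KVL.fC G p mV Ψ (G.t a) := by
  have h1 := KVL.stat_sum hΨ a
  have h2 := KVL.stat_sum hΨ (G.bar a)
  rw [G.bar_inv a, G.o_bar] at h2
  have h3 : (Real.sqrt (p a) : ℂ) * rhoV G.toSymDigraph p Ψ (G.o a)
      = (Real.sqrt (p (G.bar a)) : ℂ) * rhoV G.toSymDigraph p Ψ (G.t a) := by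
    linear_combination (h2 - h1) / 2
  -- detailed balance for sqrts
  have hb : Real.sqrt (p a) * Real.sqrt (mV (G.o a))
      = Real.sqrt (p (G.bar a)) * Real.sqrt (mV (G.t a)) := by
    rw [← Real.sqrt_mul (le_of_lt (hp.1.1 a).1), ← Real.sqrt_mul (le_of_lt (hp.1.1 _).1),
      hrev.2 a]
  have hpa : (Real.sqrt (p a) : ℂ) ≠ 0 := by
    exact_mod_cast (Real.sqrt_pos.2 (hp.1.1 a).1).ne'
  have hpb : (Real.sqrt (p (G.bar a)) : ℂ) ≠ 0 := by
    exact_mod_cast (Real.sqrt_pos.2 (hp.1.1 (G.bar a)).1).ne'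
  have hmo : (Real.sqrt (mV (G.o a)) : ℂ) ≠ 0 := by
    exact_mod_cast (KVL.sqrt_mV_pos hrev (G.o a)).ne'
  have hmt : (Real.sqrt (mV (G.t a)) : ℂ) ≠ 0 := by
    exact_mod_cast (KVL.sqrt_mV_pos hrev (G.t a)).ne'
  have hbC : (Real.sqrt (p a) : ℂ) * (Real.sqrt (mV (G.o a)) : ℂ)
      = (Real.sqrt (p (G.bar a)) : ℂ) * (Real.sqrt (mV (G.t a)) : ℂ) := by
    exact_mod_cast congrArg (fun x : ℝ => (x : ℂ)) hb
  unfold KVL.fC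
  rw [div_eq_div_iff hmo hmt]
  -- goal: rhoV (o a) * sqrt mV (t a) = rhoV (t a) * sqrt mV (o a)
  refine mul_left_cancel₀ hpa ?_
  calc Real.sqrt (p a) * (rhoV G.toSymDigraph p Ψ (G.o a) * (Real.sqrt (mV (G.t a)) : ℂ))
        = ((Real.sqrt (p a) : ℂ) * rhoV G.toSymDigraph p Ψ (G.o a)) * (Real.sqrt (mV (G.t a)) : ℂ) := by ring
      _ = ((Real.sqrt (p (G.bar a)) : ℂ) * rhoV G.toSymDigraph p Ψ (G.t a)) * (Real.sqrt (mV (G.t a)) : ℂ) := by rw [h3]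
      _ = rhoV G.toSymDigraph p Ψ (G.t a) * ((Real.sqrt (p (G.bar a)) : ℂ) * (Real.sqrt (mV (G.t a)) : ℂ)) := by ring
      _ = rhoV G.toSymDigraph p Ψ (G.t a) * ((Real.sqrt (p a) : ℂ) * (Real.sqrt (mV (G.o a)) : ℂ)) := by rw [hbC]
      _ = Real.sqrt (p a) * (rhoV G.toSymDigraph p Ψ (G.t a) * (Real.sqrt (mV (G.o a)) : ℂ)) := by ring

lemma KVL.f_const (hp : TailTransition G p) (hrev : IsReversible G.toSymDigraph p mV)
    (hΨ : IsStationaryBdry G p Ψ α β) (u v : G.V) :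
    KVL.fC G p mV Ψ u = KVL.fC G p mV Ψ v := by
  have h := G.connected u v
  induction h with
  | refl => rfl
  | tail _ hstep ih =>
    obtain ⟨a, ha, hb⟩ := hstep
    rw [ih, ← ha, ← hb]
    exact KVL.f_step hp hrev hΨ a

end KVLaux2
section KVLaux3
variable {G : TailedGraph} {p : G.A → ℝ} {mV : G.V → ℝ} {Ψ : G.A → ℂ} {α β : Fin G.r → ℂ}

lemma KVL.in_arcs_tail (j : Fin G.r) :
    {b : G.A | G.t b = G.tailV j 1} = {G.tailA j 1, G.bar (G.tailA j 0)} := by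
  ext b
  simp only [Set.mem_setOf_eq, Set.mem_insert_iff, Set.mem_singleton_iff]
  constructor
  · intro hb
    rcases G.arcs_cover b with h0 | ⟨j', k', h | h⟩
    · exfalso
      have := (G.A0_ends b h0).2
      rw [hb] at this
      exact G.tailV_notin j 0 this
    · subst h
      rw [G.tailA_t] at hb
      cases k' with
      | zero =>
        exfalso
        have := G.tailV_root j'
        rw [hb] at this
        exact G.tailV_notin j 0 this
      | succ k'' =>
        obtain ⟨hj, hk⟩ := G.tailV_inj j' k'' j 0 hb
        subst hj; subst hk
        exact Or.inl rfl
    · subst h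
      rw [G.t_bar, G.tailA_o] at hb
      obtain ⟨hj, hk⟩ := G.tailV_inj j' k' j 0 hb
      subst hj; subst hk
      exact Or.inr rfl
  · rintro (rfl | rfl)
    · rw [G.tailA_t]
    · rw [G.t_bar, G.tailA_o]

lemma KVL.rhoV_tail (hp : TailTransition G p) (hΨ : IsStationaryBdry G p Ψ α β) (j : Fin G.r) :
    rhoV G.toSymDigraph p Ψ (G.tailV j 1)
      = (Real.sqrt (1 / 2) : ℂ) * (α j + β j) := by
  have hne : G.tailA j 1 ≠ G.bar (G.tailA j 0) := by
    intro h
    have h2 : G.o (G.tailA j 1) = G.o (G.bar (G.tailA j 0)) := by rw [h]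
    rw [G.tailA_o, G.o_bar, G.tailA_t] at h2
    have := G.tailV_root j
    rw [← h2] at this
    exact G.tailV_notin j 1 this
  unfold rhoV
  rw [KVL.in_arcs_tail j, finsum_mem_pair hne]
  rw [G.bar_inv, hp.2.2 j 0, hΨ.2.1 j 1, hp.2.1 j 0, hΨ.2.2 j 0]
  ring

lemma KVL.mV_tail (j : Fin G.r) :
    mEdge G.toSymDigraph p mV (G.tailA j 0) * 2 = p (G.tailA j 0) * 2 * mV (G.tailV j 1) := by
  unfold mEdge
  rw [G.tailA_o]
  ring

/-- value of the constant `fC` on a tail vertex times √(mE e_j) -/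
lemma KVL.fC_tail (hp : TailTransition G p) (hrev : IsReversible G.toSymDigraph p mV)
    (hΨ : IsStationaryBdry G p Ψ α β) (j : Fin G.r) :
    KVL.fC G p mV Ψ (G.tailV j 1)
        * (Real.sqrt (mEdge G.toSymDigraph p mV (G.tailA j 0)) : ℂ)
      = (α j + β j) / 2 := by
  have hm : mEdge G.toSymDigraph p mV (G.tailA j 0) = (1 / 2) * mV (G.tailV j 1) := by
    unfold mEdge
    rw [G.tailA_o, hp.2.1 j 0]
  have hmV := hrev.1 (G.tailV j 1)
  have hsq : Real.sqrt (mEdge G.toSymDigraph p mV (G.tailA j 0))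
      = Real.sqrt (1 / 2) * Real.sqrt (mV (G.tailV j 1)) := by
    rw [hm, Real.sqrt_mul (by norm_num)]
  have hf : KVL.fC G p mV Ψ (G.tailV j 1)
      = (Real.sqrt (1 / 2) : ℂ) * (α j + β j) / (Real.sqrt (mV (G.tailV j 1)) : ℂ) := by
    unfold KVL.fC
    rw [KVL.rhoV_tail hp hΨ j]
  have hmne : (Real.sqrt (mV (G.tailV j 1)) : ℂ) ≠ 0 := by
    exact_mod_cast (KVL.sqrt_mV_pos hrev _).ne'
  have hhalf : (Real.sqrt (1 / 2) : ℂ) * (Real.sqrt (1 / 2) : ℂ) = 1 / 2 := by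
    rw [← Complex.ofReal_mul, Real.mul_self_sqrt (by norm_num)]
    norm_num
  rw [hf, hsq, Complex.ofReal_mul]
  calc (Real.sqrt (1 / 2) : ℂ) * (α j + β j) / (Real.sqrt (mV (G.tailV j 1)) : ℂ)
        * ((Real.sqrt (1 / 2) : ℂ) * (Real.sqrt (mV (G.tailV j 1)) : ℂ))
      = ((Real.sqrt (1 / 2) : ℂ) * (Real.sqrt (1 / 2) : ℂ)) * (α j + β j)
        * ((Real.sqrt (mV (G.tailV j 1)) : ℂ) / (Real.sqrt (mV (G.tailV j 1)) : ℂ)) := by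
        ring
    _ = (α j + β j) / 2 := by
        rw [div_self hmne, hhalf]
        ring
end KVLaux3
section KVLaux4
variable {G : TailedGraph} {p : G.A → ℝ} {mV : G.V → ℝ} {Ψ : G.A → ℂ} {α β : Fin G.r → ℂ}

lemma KVL.in_eq_bar_out (u : G.V) :
    {b : G.A | G.t b = u} = G.bar '' {a : G.A | G.o a = u} := by
  ext b
  simp only [Set.mem_setOf_eq, Set.mem_image]
  constructor
  · intro hb
    exact ⟨G.bar b, by rw [G.o_bar, hb], G.bar_inv b⟩
  · rintro ⟨a, ha, rfl⟩
    rw [G.t_bar, ha]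

lemma KVL.rhoV_out (u : G.V) :
    rhoV G.toSymDigraph p Ψ u
      = ∑ᶠ a ∈ {a : G.A | G.o a = u}, (Real.sqrt (p a) : ℂ) * Ψ (G.bar a) := by
  unfold rhoV
  rw [KVL.in_eq_bar_out u, finsum_mem_image (G.bar_inv.injective.injOn)]
  apply finsum_mem_congr rfl
  intro a _
  rw [G.bar_inv]

lemma KVL.sum_p_one (hp : TailTransition G p) (u : G.V) :
    ∑ᶠ a ∈ {a : G.A | G.o a = u}, ((p a : ℝ) : ℂ) = 1 := by
  have h := hp.1.2 u
  have hfin := G.out_fin u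
  rw [finsum_mem_eq_finite_toFinset_sum _ hfin] at h ⊢
  rw [← Complex.ofReal_sum, h, Complex.ofReal_one]

lemma KVL.sum_out (hp : TailTransition G p) (hΨ : IsStationaryBdry G p Ψ α β) (u : G.V) :
    ∑ᶠ a ∈ {a : G.A | G.o a = u}, (Real.sqrt (p a) : ℂ) * Ψ a
      = rhoV G.toSymDigraph p Ψ u := by
  have hfin := G.out_fin u
  have key : ∀ a ∈ hfin.toFinset, (Real.sqrt (p a) : ℂ) * Ψ a
      = 2 * ((p a : ℝ) : ℂ) * rhoV G.toSymDigraph p Ψ u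
        - (Real.sqrt (p a) : ℂ) * Ψ (G.bar a) := by
    intro a ha
    have hau : G.o a = u := by simpa using (Set.Finite.mem_toFinset hfin).1 ha
    have h1 := KVL.stat_sum hΨ a
    rw [hau] at h1
    have hps : (Real.sqrt (p a) : ℂ) * (Real.sqrt (p a) : ℂ) = ((p a : ℝ) : ℂ) := by
      rw [← Complex.ofReal_mul, Real.mul_self_sqrt (le_of_lt (hp.1.1 a).1)]
    calc (Real.sqrt (p a) : ℂ) * Ψ a
        = (Real.sqrt (p a) : ℂ) * (Ψ a + Ψ (G.bar a)) - (Real.sqrt (p a) : ℂ) * Ψ (G.bar a) := by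
          ring
      _ = 2 * ((p a : ℝ) : ℂ) * rhoV G.toSymDigraph p Ψ u
            - (Real.sqrt (p a) : ℂ) * Ψ (G.bar a) := by
          rw [h1]
          rw [← hps]
          ring
  rw [finsum_mem_eq_finite_toFinset_sum _ hfin, Finset.sum_congr rfl key,
    Finset.sum_sub_distrib]
  have hA : ∑ a ∈ hfin.toFinset, 2 * ((p a : ℝ) : ℂ) * rhoV G.toSymDigraph p Ψ u
      = 2 * rhoV G.toSymDigraph p Ψ u := by
    have : ∑ a ∈ hfin.toFinset, ((p a : ℝ) : ℂ) = 1 := by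
      rw [← finsum_mem_eq_finite_toFinset_sum _ hfin]
      exact KVL.sum_p_one hp u
    calc ∑ a ∈ hfin.toFinset, 2 * ((p a : ℝ) : ℂ) * rhoV G.toSymDigraph p Ψ u
        = (∑ a ∈ hfin.toFinset, ((p a : ℝ) : ℂ)) * (2 * rhoV G.toSymDigraph p Ψ u) := by
          rw [Finset.sum_mul]
          apply Finset.sum_congr rfl
          intros
          ring
      _ = 2 * rhoV G.toSymDigraph p Ψ u := by rw [this, one_mul]
  have hB : ∑ a ∈ hfin.toFinset, (Real.sqrt (p a) : ℂ) * Ψ (G.bar a)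
      = rhoV G.toSymDigraph p Ψ u := by
    rw [← finsum_mem_eq_finite_toFinset_sum _ hfin, ← KVL.rhoV_out u]
  rw [hA, hB]
  ring

end KVLaux4
section KVLaux5
variable {G : TailedGraph} {p : G.A → ℝ} {mV : G.V → ℝ} {Ψ : G.A → ℂ} {α β : Fin G.r → ℂ}

/-- the summand of the current law -/
noncomputable def KVL.g (G : TailedGraph) (p : G.A → ℝ) (mV : G.V → ℝ) (Ψ : G.A → ℂ)
    (a : G.A) : ℂ :=
  (Real.sqrt (mEdge G.toSymDigraph p mV a) : ℂ) * (Ψ a - Ψ (G.bar a))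

lemma KVL.current_law (hp : TailTransition G p) (hrev : IsReversible G.toSymDigraph p mV)
    (hΨ : IsStationaryBdry G p Ψ α β) (u : G.V) :
    ∑ᶠ a ∈ {a : G.A | G.o a = u}, KVL.g G p mV Ψ a = 0 := by
  have hfin := G.out_fin u
  have key : ∀ a ∈ hfin.toFinset, KVL.g G p mV Ψ a
      = (Real.sqrt (mV u) : ℂ) *
        ((Real.sqrt (p a) : ℂ) * Ψ a - (Real.sqrt (p a) : ℂ) * Ψ (G.bar a)) := by
    intro a ha
    have hau : G.o a = u := by simpa using (Set.Finite.mem_toFinset hfin).1 ha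
    unfold KVL.g
    rw [KVL.sqrt_mE hp hrev a, hau, Complex.ofReal_mul]
    ring
  rw [finsum_mem_eq_finite_toFinset_sum _ hfin, Finset.sum_congr rfl key, ← Finset.mul_sum,
    Finset.sum_sub_distrib]
  have h1 : ∑ a ∈ hfin.toFinset, (Real.sqrt (p a) : ℂ) * Ψ a = rhoV G.toSymDigraph p Ψ u := by
    rw [← finsum_mem_eq_finite_toFinset_sum _ hfin]
    exact KVL.sum_out hp hΨ u
  have h2 : ∑ a ∈ hfin.toFinset, (Real.sqrt (p a) : ℂ) * Ψ (G.bar a)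
      = rhoV G.toSymDigraph p Ψ u := by
    rw [← finsum_mem_eq_finite_toFinset_sum _ hfin, ← KVL.rhoV_out u]
  rw [h1, h2]
  ring

lemma KVL.A0_sum_zero (hrev : IsReversible G.toSymDigraph p mV) :
    ∑ᶠ a ∈ G.A0, KVL.g G p mV Ψ a = 0 := by
  rw [finsum_mem_eq_finite_toFinset_sum _ G.A0_fin]
  apply Finset.sum_involution (fun a _ => G.bar a)
  · intro a _
    unfold KVL.g
    rw [KVL.mE_bar hrev, G.bar_inv]
    ring
  · intro a _ hne h
    apply hne
    unfold KVL.g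
    rw [h]
    ring
  · intro a ha
    simp only [Set.Finite.mem_toFinset] at ha ⊢
    exact G.A0_bar a ha
  · intro a _
    exact G.bar_inv a

lemma KVL.bar_e_inj : Function.Injective (fun j : Fin G.r => G.bar (G.tailA j 0)) := by
  intro j j' h
  have h2 : G.tailA j 0 = G.tailA j' 0 := G.bar_inv.injective h
  have h3 := congrArg G.o h2
  rw [G.tailA_o, G.tailA_o] at h3
  exact (G.tailV_inj j 0 j' 0 h3).1

lemma KVL.origin_in_V0 :
    {a : G.A | G.o a ∈ G.V0}
      = G.A0 ∪ Set.range (fun j : Fin G.r => G.bar (G.tailA j 0)) := by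
  ext a
  simp only [Set.mem_setOf_eq, Set.mem_union, Set.mem_range]
  constructor
  · intro ha
    rcases G.arcs_cover a with h0 | ⟨j, k, h | h⟩
    · exact Or.inl h0
    · exfalso
      rw [h, G.tailA_o] at ha
      exact G.tailV_notin j k ha
    · subst h
      rw [G.o_bar, G.tailA_t] at ha
      cases k with
      | zero => exact Or.inr ⟨j, rfl⟩
      | succ k' => exact absurd ha (G.tailV_notin j k')
  · rintro (h0 | ⟨j, rfl⟩)
    · exact (G.A0_ends a h0).1
    · rw [G.o_bar, G.tailA_t]
      exact G.tailV_root j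

lemma KVL.total_current (hp : TailTransition G p) (hrev : IsReversible G.toSymDigraph p mV)
    (hΨ : IsStationaryBdry G p Ψ α β) :
    ∑ j : Fin G.r, (Real.sqrt (mEdge G.toSymDigraph p mV (G.tailA j 0)) : ℂ) * (β j - α j)
      = 0 := by
  have hBig : ∑ᶠ a ∈ {a : G.A | G.o a ∈ G.V0}, KVL.g G p mV Ψ a = 0 := by
    have hcover : {a : G.A | G.o a ∈ G.V0} = ⋃ u ∈ G.V0, {a : G.A | G.o a = u} := by
      ext a
      simp [Set.mem_iUnion]
    rw [hcover, finsum_mem_biUnion ?hd G.V0_fin (fun u _ => G.out_fin u)]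
    · rw [finsum_mem_eq_finite_toFinset_sum _ G.V0_fin]
      apply Finset.sum_eq_zero
      intro u _
      exact KVL.current_law hp hrev hΨ u
    case hd =>
      intro u _ v _ huv
      apply Set.disjoint_left.2
      intro a ha hb
      exact huv (ha.symm.trans hb)
  rw [KVL.origin_in_V0] at hBig
  have hdisj : Disjoint G.A0 (Set.range (fun j : Fin G.r => G.bar (G.tailA j 0))) := by
    apply Set.disjoint_left.2
    rintro a ha ⟨j, rfl⟩
    have h2 := G.A0_bar _ ha
    rw [G.bar_inv (G.tailA j 0)] at h2
    exact G.tailA_nin j 0 h2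
  rw [finsum_mem_union hdisj G.A0_fin (Set.finite_range _), KVL.A0_sum_zero hrev,
    finsum_mem_range KVL.bar_e_inj, zero_add] at hBig
  rw [finsum_eq_sum_of_fintype] at hBig
  rw [← hBig]
  apply Finset.sum_congr rfl
  intro j _
  unfold KVL.g
  rw [KVL.mE_bar hrev, G.bar_inv, hΨ.2.2 j 0, hΨ.2.1 j 0]

end KVLaux5
section KVLaux6
variable {G : TailedGraph} {p : G.A → ℝ} {mV : G.V → ℝ} {Ψ : G.A → ℂ} {α β : Fin G.r → ℂ}

lemma KVL.mDelta_pos (hp : TailTransition G p) (hrev : IsReversible G.toSymDigraph p mV) :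
    0 < mDelta G p mV := by
  have : Nonempty (Fin G.r) := ⟨⟨0, G.r_pos⟩⟩
  exact Finset.sum_pos (fun j _ => KVL.mE_pos hp hrev _) Finset.univ_nonempty

lemma KVL.sqrt_mDelta_bdry (hp : TailTransition G p)
    (hrev : IsReversible G.toSymDigraph p mV) :
    (Real.sqrt (mDelta G p mV) : ℂ) * bdryInner G p mV α
      = ∑ j : Fin G.r, (Real.sqrt (mEdge G.toSymDigraph p mV (G.tailA j 0)) : ℂ) * α j := by
  have hδ := KVL.mDelta_pos (mV := mV) hp hrev
  have hδs : (Real.sqrt (mDelta G p mV) : ℂ) ≠ 0 := by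
    exact_mod_cast (Real.sqrt_pos.2 hδ).ne'
  unfold bdryInner
  rw [Finset.mul_sum]
  apply Finset.sum_congr rfl
  intro j _
  have hdiv : Real.sqrt (mEdge G.toSymDigraph p mV (G.tailA j 0) / mDelta G p mV)
      = Real.sqrt (mEdge G.toSymDigraph p mV (G.tailA j 0)) / Real.sqrt (mDelta G p mV) := by
    rw [Real.sqrt_div (le_of_lt (KVL.mE_pos hp hrev _))]
  rw [hdiv, Complex.ofReal_div]
  field_simp

lemma KVL.bdry_eq_const (hp : TailTransition G p) (hrev : IsReversible G.toSymDigraph p mV)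
    (hΨ : IsStationaryBdry G p Ψ α β) (u : G.V) :
    (Real.sqrt (mDelta G p mV) : ℂ) * bdryInner G p mV α
      = ((mDelta G p mV : ℝ) : ℂ) * KVL.fC G p mV Ψ u := by
  rw [KVL.sqrt_mDelta_bdry hp hrev]
  have key : ∀ j : Fin G.r,
      (Real.sqrt (mEdge G.toSymDigraph p mV (G.tailA j 0)) : ℂ) * α j
        = ((mEdge G.toSymDigraph p mV (G.tailA j 0) : ℝ) : ℂ) * KVL.fC G p mV Ψ u
          - (1 / 2) * ((Real.sqrt (mEdge G.toSymDigraph p mV (G.tailA j 0)) : ℂ)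
              * (β j - α j)) := by
    intro j
    have h1 := KVL.fC_tail (mV := mV) hp hrev hΨ j
    rw [KVL.f_const hp hrev hΨ (G.tailV j 1) u] at h1
    have hsq : (Real.sqrt (mEdge G.toSymDigraph p mV (G.tailA j 0)) : ℂ)
        * (Real.sqrt (mEdge G.toSymDigraph p mV (G.tailA j 0)) : ℂ)
        = ((mEdge G.toSymDigraph p mV (G.tailA j 0) : ℝ) : ℂ) := by
      rw [← Complex.ofReal_mul, Real.mul_self_sqrt (le_of_lt (KVL.mE_pos hp hrev _))]
    linear_combination (-(Real.sqrt (mEdge G.toSymDigraph p mV (G.tailA j 0)) : ℂ)) * h1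
      + KVL.fC G p mV Ψ u * hsq
  rw [Finset.sum_congr rfl (fun j _ => key j), Finset.sum_sub_distrib, ← Finset.mul_sum,
    KVL.total_current hp hrev hΨ, ← Finset.sum_mul]
  have : ∑ j : Fin G.r, ((mEdge G.toSymDigraph p mV (G.tailA j 0) : ℝ) : ℂ)
      = ((mDelta G p mV : ℝ) : ℂ) := by
    unfold mDelta
    push_cast
    rfl
  rw [this]
  ring

/-- the key pointwise identity -/
lemma KVL.key_identity (hp : TailTransition G p) (hrev : IsReversible G.toSymDigraph p mV)
    (hΨ : IsStationaryBdry G p Ψ α β) (a : G.A) :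
    (Real.sqrt (mDelta G p mV) : ℂ) * (Ψ a + Ψ (G.bar a))
      = 2 * (Real.sqrt (mEdge G.toSymDigraph p mV a) : ℂ) * bdryInner G p mV α := by
  have h1 := KVL.stat_sum hΨ a
  have h2 := KVL.rhoV_eq (Ψ := Ψ) (p := p) hrev (G.o a)
  have h3 := KVL.bdry_eq_const (α := α) (β := β) hp hrev hΨ (G.o a)
  have hδ := KVL.mDelta_pos (mV := mV) hp hrev
  have hδC : ((mDelta G p mV : ℝ) : ℂ)
      = (Real.sqrt (mDelta G p mV) : ℂ) * (Real.sqrt (mDelta G p mV) : ℂ) := by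
    rw [← Complex.ofReal_mul, Real.mul_self_sqrt (le_of_lt hδ)]
  have hδs : (Real.sqrt (mDelta G p mV) : ℂ) ≠ 0 := by
    exact_mod_cast (Real.sqrt_pos.2 hδ).ne'
  have hmE : (Real.sqrt (mEdge G.toSymDigraph p mV a) : ℂ)
      = (Real.sqrt (p a) : ℂ) * (Real.sqrt (mV (G.o a)) : ℂ) := by
    rw [← Complex.ofReal_mul, KVL.sqrt_mE hp hrev a]
  rw [hδC] at h3
  -- from h3 : √δ * bdry = √δ * √δ * fC (o a); cancel
  have h3' : bdryInner G p mV α = (Real.sqrt (mDelta G p mV) : ℂ) * KVL.fC G p mV Ψ (G.o a) := by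
    apply mul_left_cancel₀ hδs
    rw [h3]
    ring
  rw [h1, h2, h3', hmE]
  ring
end KVLaux6
section KVLaux7
variable {G : TailedGraph} {p : G.A → ℝ} {mV : G.V → ℝ} {Ψ : G.A → ℂ} {α β : Fin G.r → ℂ}

lemma KVL.per_arc (hp : TailTransition G p) (hrev : IsReversible G.toSymDigraph p mV)
    (hΨ : IsStationaryBdry G p Ψ α β) (a : G.A) :
    ((1 / Real.sqrt (mEdge G.toSymDigraph p mV a) : ℝ) : ℂ) * Ψ a
      - ((1 / Real.sqrt (mEdge G.toSymDigraph p mV a) : ℝ) : ℂ) * Ψ (G.bar a)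
    = 2 * (current G p mV α Ψ a / ((mEdge G.toSymDigraph p mV a : ℝ) : ℂ)) := by
  have key := KVL.key_identity (α := α) (β := β) hp hrev hΨ a
  have he : (0:ℝ) < mEdge G.toSymDigraph p mV a := KVL.mE_pos hp hrev a
  have hδ := KVL.mDelta_pos (mV := mV) hp hrev
  have hseC : (Real.sqrt (mEdge G.toSymDigraph p mV a) : ℂ) ≠ 0 := by
    exact_mod_cast (Real.sqrt_pos.2 he).ne'
  have heC : ((mEdge G.toSymDigraph p mV a : ℝ) : ℂ) ≠ 0 := by
    exact_mod_cast he.ne'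
  have hsdC : (Real.sqrt (mDelta G p mV) : ℂ) ≠ 0 := by
    exact_mod_cast (Real.sqrt_pos.2 hδ).ne'
  have hsq : (Real.sqrt (mEdge G.toSymDigraph p mV a) : ℂ)
      * (Real.sqrt (mEdge G.toSymDigraph p mV a) : ℂ)
      = ((mEdge G.toSymDigraph p mV a : ℝ) : ℂ) := by
    rw [← Complex.ofReal_mul, Real.mul_self_sqrt (le_of_lt he)]
  unfold current
  push_cast
  field_simp
  ring_nf
  linear_combination (-2 * (Real.sqrt (mDelta G p mV) : ℂ) * Ψ a) * hsq
    + (-((mEdge G.toSymDigraph p mV a : ℝ) : ℂ)) * key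
end KVLaux7

/-- Kirchhoff's voltage law: for every cycle `c`,
`⟨w_c, Ψ⟩ = 2 Σ_k j(a_k)/m_E(|a_k|)`; in particular
`Σ_k j(a_k)/m_E(|a_k|) = 0` iff `Ψ` is orthogonal to `w_c`. -/
theorem kirchhoff_voltage_law (G : TailedGraph) (p : G.A → ℝ)
    (hp : TailTransition G p) (mV : G.V → ℝ)
    (hrev : IsReversible G.toSymDigraph p mV)
    (Ψ : G.A → ℂ) (α β : Fin G.r → ℂ) (hΨ : IsStationaryBdry G p Ψ α β)
    (s : ℕ) (c : Fin s → G.A) (hc : IsCycle G.toSymDigraph s c) :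
    (∑ᶠ a : G.A,
        (starRingEnd ℂ) (cycleVec G.toSymDigraph (mEdge G.toSymDigraph p mV) c a) * Ψ a)
      = 2 * ∑ k : Fin s,
          current G p mV α Ψ (c k) / ((mEdge G.toSymDigraph p mV (c k) : ℝ) : ℂ) ∧
    ((∑ k : Fin s,
        current G p mV α Ψ (c k) / ((mEdge G.toSymDigraph p mV (c k) : ℝ) : ℂ)) = 0 ↔
      (∑ᶠ a : G.A,
        (starRingEnd ℂ) (cycleVec G.toSymDigraph (mEdge G.toSymDigraph p mV) c a) * Ψ a) = 0) := by
  classical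
  set mE := mEdge G.toSymDigraph p mV with hmE
  set F : G.A → ℂ :=
    fun a => (starRingEnd ℂ) (cycleVec G.toSymDigraph mE c a) * Ψ a with hF
  set φ : Fin s ⊕ Fin s → G.A := Sum.elim c (fun k => G.bar (c k)) with hφ
  have hinj : Function.Injective φ := hc.2.2
  set T : Finset G.A := Finset.image φ Finset.univ with hT
  have hsupp : Function.support F ⊆ (T : Set G.A) := by
    intro a ha
    have hcv : cycleVec G.toSymDigraph mE c a ≠ 0 := by
      intro h0
      apply ha
      rw [hF]
      simp [h0]
    by_cases h1 : ∃ k, a = c k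
    · obtain ⟨k, rfl⟩ := h1
      exact Finset.mem_coe.2 (Finset.mem_image.2 ⟨Sum.inl k, Finset.mem_univ _, rfl⟩)
    · by_cases h2 : ∃ k, a = G.bar (c k)
      · obtain ⟨k, rfl⟩ := h2
        exact Finset.mem_coe.2 (Finset.mem_image.2 ⟨Sum.inr k, Finset.mem_univ _, rfl⟩)
      · exfalso
        apply hcv
        unfold cycleVec
        rw [if_neg h1, if_neg h2]
  have hmain : (∑ᶠ a : G.A, F a)
      = 2 * ∑ k : Fin s, current G p mV α Ψ (c k) / ((mE (c k) : ℝ) : ℂ) := by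
    rw [finsum_eq_finset_sum_of_support_subset F hsupp, hT,
      Finset.sum_image (fun x _ y _ h => hinj h), Fintype.sum_sum_type]
    have hvpos : ∀ k : Fin s, F (φ (Sum.inl k))
        = ((1 / Real.sqrt (mE (c k)) : ℝ) : ℂ) * Ψ (c k) := by
      intro k
      have hv : cycleVec G.toSymDigraph mE c (c k) = ((1 / Real.sqrt (mE (c k)) : ℝ) : ℂ) := by
        unfold cycleVec
        rw [if_pos ⟨k, rfl⟩]
      rw [hF]
      simp only [hφ, Sum.elim_inl]
      rw [hv, Complex.conj_ofReal]
    have hvneg : ∀ k : Fin s, F (φ (Sum.inr k))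
        = -(((1 / Real.sqrt (mE (c k)) : ℝ) : ℂ) * Ψ (G.bar (c k))) := by
      intro k
      have hno : ¬∃ k', G.bar (c k) = c k' := by
        rintro ⟨k', hk'⟩
        have : φ (Sum.inl k') = φ (Sum.inr k) := by
          simp only [hφ, Sum.elim_inl, Sum.elim_inr]
          exact hk'.symm
        exact Sum.inl_ne_inr (hinj this)
      have hv : cycleVec G.toSymDigraph mE c (G.bar (c k))
          = ((-(1 / Real.sqrt (mE (G.bar (c k)))) : ℝ) : ℂ) := by
        unfold cycleVec
        rw [if_neg hno, if_pos ⟨k, rfl⟩]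
      rw [hF]
      simp only [hφ, Sum.elim_inr]
      rw [hv, Complex.conj_ofReal, hmE, KVL.mE_bar hrev]
      push_cast
      ring
    rw [Finset.sum_congr rfl (fun k _ => hvpos k), Finset.sum_congr rfl (fun k _ => hvneg k)]
    rw [Finset.mul_sum, ← Finset.sum_add_distrib]
    apply Finset.sum_congr rfl
    intro k _
    have := KVL.per_arc (α := α) (β := β) hp hrev hΨ (c k)
    rw [← hmE] at this
    linear_combination this
  refine ⟨hmain, ?_⟩
  rw [hmain]
  constructor
  · intro h
    rw [h, mul_zero]
  · intro h
    rcases mul_eq_zero.1 h with h2 | h2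
    · exact absurd h2 two_ne_zero
    · exact h2
end

section
/- Suppose p is non-reversible. Then any Ψ : Ã → ℂ with UΨ = Ψ satisfies Σ_{a:t(a)=u} √(p(ā))·Ψ(a) = 0 for every vertex u ∈ Ṽ, and Ψ(ā) = −Ψ(a) for every arc a ∈ Ã. -/
open scoped BigOperators

/-- `Ψ` is a stationary state with boundary data `α β : ℂ^r`:
`UΨ = Ψ`, `Ψ = α_j` on the inward arcs of tail `j` and `Ψ = β_j` on the
outward arcs of tail `j`. -/
def IsStationaryState (G : TailedGraph) (p : G.A → ℝ) (Ψ : G.A → ℂ)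
    (α β : Fin G.r → ℂ) : Prop :=
  szegedy G.toSymDigraph p Ψ = Ψ ∧
  (∀ j k, Ψ (G.tailA j k) = α j) ∧
  ∀ j k, Ψ (G.bar (G.tailA j k)) = β j

/-- if `p` is non-reversible, then any fixed point `Ψ` of `U`
satisfies `Σ_{t(a)=u} √(p ā) Ψ(a) = 0` at every vertex and `Ψ(ā) = −Ψ(a)`
on every arc. -/
theorem nonreversible_fixed_point (G : SymDigraph) (p : G.A → ℝ)
    (hp : IsTransition G p)
    (hnrev : ¬ ∃ m : G.V → ℝ, (∀ u, 0 < m u) ∧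
        ∀ a : G.A, p a * m (G.o a) = p (G.bar a) * m (G.t a))
    (Ψ : G.A → ℂ) (hΨ : szegedy G p Ψ = Ψ) :
    (∀ u : G.V,
      (∑ᶠ a ∈ {a : G.A | G.t a = u}, (Real.sqrt (p (G.bar a)) : ℂ) * Ψ a) = 0) ∧
    ∀ a : G.A, Ψ (G.bar a) = -Ψ a := by
  set ρ : G.V → ℂ :=
    fun u => ∑ᶠ b ∈ {b : G.A | G.t b = u}, (Real.sqrt (p (G.bar b)) : ℂ) * Ψ b with hρ
  have h1 : ∀ a : G.A,
      2 * (Real.sqrt (p a) : ℂ) * ρ (G.o a) - Ψ (G.bar a) = Ψ a := fun a =>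
    congrFun hΨ a
  have hsum : ∀ a : G.A, Ψ a + Ψ (G.bar a) = 2 * (Real.sqrt (p a) : ℂ) * ρ (G.o a) := by
    intro a
    have := h1 a
    linear_combination -this
  have hkey : ∀ a : G.A,
      (Real.sqrt (p a) : ℂ) * ρ (G.o a) = (Real.sqrt (p (G.bar a)) : ℂ) * ρ (G.t a) := by
    intro a
    have ha := hsum a
    have hb := hsum (G.bar a)
    rw [G.bar_inv a, G.o_bar a] at hb
    have : 2 * (Real.sqrt (p a) : ℂ) * ρ (G.o a)
        = 2 * (Real.sqrt (p (G.bar a)) : ℂ) * ρ (G.t a) := by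
      rw [← ha, ← hb]; ring
    linear_combination this / 2
  have hzero : ∀ u : G.V, ρ u = 0 := by
    by_contra h
    push_neg at h
    obtain ⟨u0, hu0⟩ := h
    have hne : ∀ v : G.V, ρ v ≠ 0 := by
      intro v
      have hconn := G.connected u0 v
      induction hconn with
      | refl => exact hu0
      | tail _ ha ih =>
        obtain ⟨a, hoa, hta⟩ := ha
        have := hkey a
        rw [hoa, hta] at this
        intro hv
        rw [hv, mul_zero] at this
        have hsq : Real.sqrt (p _) ≠ 0 :=
          ne_of_gt (Real.sqrt_pos.mpr (hp.1 a).1)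
        have : (Real.sqrt (p a) : ℂ) ≠ 0 := by
          exact_mod_cast Complex.ofReal_ne_zero.mpr hsq
        exact ih (by
          have := mul_eq_zero.mp ‹(Real.sqrt (p a) : ℂ) * ρ _ = 0›
          tauto)
    apply hnrev
    refine ⟨fun v => Complex.normSq (ρ v), fun v => ?_, fun a => ?_⟩
    · exact Complex.normSq_pos.mpr (hne v)
    · have := congrArg Complex.normSq (hkey a)
      simpa [map_mul, Complex.normSq_ofReal,
        Real.mul_self_sqrt (le_of_lt (hp.1 a).1),
        Real.mul_self_sqrt (le_of_lt (hp.1 (G.bar a)).1)] using this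
  constructor
  · intro u; exact hzero u
  · intro a
    have := hsum a
    rw [hzero (G.o a), mul_zero] at this
    linear_combination this
end

section
/- (Scattering for the non-reversible case.) Suppose p is non-reversible and Ψ is a stationary state with boundary data α,β ∈ ℂ^r. Then the output is the phase flip of the input: β_j = −α_j for every j ∈ {1,…,r}. -/
open scoped BigOperators

/-- `Ψ` is a stationary state with boundary data `α β : ℂ^r`:
`UΨ = Ψ`, `Ψ = α_j` on the inward arcs of tail `j` and `Ψ = β_j` on the
outward arcs of tail `j`. -/
def IsStationaryQW (G : TailedGraph) (p : G.A → ℝ) (Ψ : G.A → ℂ)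
    (α β : Fin G.r → ℂ) : Prop :=
  szegedy G.toSymDigraph p Ψ = Ψ ∧
  (∀ j k, Ψ (G.tailA j k) = α j) ∧
  ∀ j k, Ψ (G.bar (G.tailA j k)) = β j

/-- scattering, non-reversible case: the output is the phase
flip of the input, `β_j = −α_j`. -/
theorem scattering_nonreversible (G : TailedGraph) (p : G.A → ℝ)
    (hp : TailTransition G p)
    (hnrev : ¬ ∃ m : G.V → ℝ, (∀ u, 0 < m u) ∧
        ∀ a : G.A, p a * m (G.o a) = p (G.bar a) * m (G.t a))
    (Ψ : G.A → ℂ) (α β : Fin G.r → ℂ) (hΨ : IsStationaryQW G p Ψ α β) :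
    ∀ j : Fin G.r, β j = -α j := by

  classical
  obtain ⟨hU, hα, hβ⟩ := hΨ
  have hppos : ∀ a : G.A, 0 < p a := fun a => (hp.1.1 a).1
  set ρ := rhoV G.toSymDigraph p Ψ with hρdef
  -- key identity: Ψ a + Ψ ā = 2 √(p a) ρ (o a)
  have key : ∀ a : G.A, Ψ a + Ψ (G.bar a) =
      2 * (Real.sqrt (p a) : ℂ) * ρ (G.o a) := by
    intro a
    have h := congrFun hU a
    have h' : 2 * (Real.sqrt (p a) : ℂ) * ρ (G.o a) - Ψ (G.bar a) = Ψ a := h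
    linear_combination -h'
  -- balance: √(p a) ρ(o a) = √(p ā) ρ(t a)
  have bal : ∀ a : G.A, (Real.sqrt (p a) : ℂ) * ρ (G.o a)
      = (Real.sqrt (p (G.bar a)) : ℂ) * ρ (G.t a) := by
    intro a
    have h1 := key a
    have h2 := key (G.bar a)
    rw [G.bar_inv a, G.o_bar] at h2
    have h3 : 2 * ((Real.sqrt (p a) : ℂ) * ρ (G.o a))
        = 2 * ((Real.sqrt (p (G.bar a)) : ℂ) * ρ (G.t a)) := by
      linear_combination h2 - h1
    exact mul_left_cancel₀ two_ne_zero h3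
  have sqrt_ne : ∀ a : G.A, ((Real.sqrt (p a) : ℝ) : ℂ) ≠ 0 := by
    intro a
    have : Real.sqrt (p a) ≠ 0 := (Real.sqrt_pos.mpr (hppos a)).ne'
    exact_mod_cast this
  -- propagation of zeros of ρ along arcs
  have prop : ∀ a : G.A, ρ (G.o a) = 0 → ρ (G.t a) = 0 := by
    intro a h
    have hb := bal a
    rw [h, mul_zero] at hb
    exact (mul_eq_zero.mp hb.symm).resolve_left (sqrt_ne (G.bar a))
  -- ρ is identically zero
  have hzero : ∀ u : G.V, ρ u = 0 := by
    by_cases hz : ∀ u : G.V, ρ u ≠ 0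
    · exfalso
      refine hnrev ⟨fun u => Complex.normSq (ρ u), fun u => Complex.normSq_pos.mpr (hz u), ?_⟩
      intro a
      have hb := bal a
      have h2 := congrArg Complex.normSq hb
      rw [Complex.normSq_mul, Complex.normSq_mul, Complex.normSq_ofReal,
        Complex.normSq_ofReal, Real.mul_self_sqrt (hppos a).le,
        Real.mul_self_sqrt (hppos (G.bar a)).le] at h2
      exact h2
    · push_neg at hz
      obtain ⟨u₀, hu₀⟩ := hz
      intro v
      have hconn := G.connected u₀ v
      induction hconn with
      | refl => exact hu₀
      | tail hstep harc ih =>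
        obtain ⟨a, ho, ht⟩ := harc
        rw [← ht]
        exact prop a (by rw [ho]; exact ih)
  -- conclusion
  have flip : ∀ a : G.A, Ψ (G.bar a) = -Ψ a := by
    intro a
    have h := key a
    rw [hzero (G.o a), mul_zero] at h
    linear_combination h
  intro j
  have h1 := hβ j 0
  have h2 := hα j 0
  rw [flip (G.tailA j 0), h2] at h1
  exact h1.symm
end

section
/- Suppose p is reversible, Ψ is a stationary state with boundary data α,β ∈ ℂ^r, A0 is nonempty, and ⟨m_{δE},α⟩ = Σ_{j=1}^r √(m_E(|e_j|)/m(δG0))·α_j ≠ 0. Then the following two statements are equivalent: (1) there exists a ∈ A0 with Ψ(a) ≠ 0 or Ψ(ā) ≠ 0; (2) for every a ∈ A0, Ψ(a) ≠ 0 or Ψ(ā) ≠ 0. -/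
open scoped BigOperators

section Proof

variable (G : TailedGraph) (p : G.A → ℝ) (mV : G.V → ℝ) (Ψ : G.A → ℂ)

theorem key_zero (hp : TailTransition G p)
    (hrev : IsReversible G.toSymDigraph p mV)
    (α β : Fin G.r → ℂ) (hΨ : IsStationaryState G p Ψ α β)
    (hinner : bdryInner G p mV α ≠ 0) :
    ∀ a : G.A, Ψ a ≠ 0 ∨ Ψ (G.bar a) ≠ 0 := by
  intro a₀
  by_contra h0
  push_neg at h0
  obtain ⟨h01, h02⟩ := h0
  have hppos : ∀ a, 0 < p a := fun a => (hp.1.1 a).1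
  have hsq : ∀ a, (Real.sqrt (p a) : ℂ) ≠ 0 := fun a =>
    Complex.ofReal_ne_zero.mpr (ne_of_gt (Real.sqrt_pos.mpr (hppos a)))
  -- Step A
  have hA : ∀ a, Ψ a + Ψ (G.bar a)
      = 2 * (Real.sqrt (p a) : ℂ) * rhoV G.toSymDigraph p Ψ (G.o a) := by
    intro a
    have h := congrFun hΨ.1 a
    simp only [szegedy, rhoV] at h ⊢
    linear_combination -h
  -- Step B
  have hB : ∀ a, (Real.sqrt (p a) : ℂ) * rhoV G.toSymDigraph p Ψ (G.o a)
      = (Real.sqrt (p (G.bar a)) : ℂ) * rhoV G.toSymDigraph p Ψ (G.t a) := by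
    intro a
    have h1 := hA a
    have h2 := hA (G.bar a)
    rw [G.bar_inv a, G.o_bar] at h2
    linear_combination (h2 - h1) / 2
  -- Step C
  have hC : rhoV G.toSymDigraph p Ψ (G.o a₀) = 0 := by
    have h := hA a₀
    rw [h01, h02, add_zero] at h
    have h2 := h.symm
    rcases mul_eq_zero.mp h2 with h3 | h3
    · rcases mul_eq_zero.mp h3 with h4 | h4
      · norm_num at h4
      · exact absurd h4 (hsq a₀)
    · exact h3
  -- Step D
  have hD : ∀ u, rhoV G.toSymDigraph p Ψ u = 0 := by
    intro u
    have hconn := G.connected (G.o a₀) u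
    induction hconn with
    | refl => exact hC
    | tail _ hstep ih =>
      obtain ⟨a, hao, hat⟩ := hstep
      have h := hB a
      rw [hao, ih, mul_zero] at h
      rcases mul_eq_zero.mp h.symm with h3 | h3
      · exact absurd h3 (hsq (G.bar a))
      · rw [← hat]; exact h3
  -- Ψ is antisymmetric
  have hanti : ∀ a, Ψ (G.bar a) = -Ψ a := by
    intro a
    have h := hA a
    rw [hD, mul_zero] at h
    linear_combination h
  -- β = -α
  have hβ : ∀ j, β j = -(α j) := by
    intro j
    have h := hanti (G.tailA j 0)
    rw [hΨ.2.1 j 0, hΨ.2.2 j 0] at h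
    exact h
  -- in-arc sets are finite
  have hin_fin : ∀ u, {b : G.A | G.t b = u}.Finite := by
    intro u
    have heq : {b : G.A | G.t b = u} = G.bar '' {a : G.A | G.o a = u} := by
      ext b
      constructor
      · intro hb
        exact ⟨G.bar b, by simpa [Set.mem_setOf_eq, G.o_bar] using hb, G.bar_inv b⟩
      · rintro ⟨a, ha, rfl⟩
        simpa [Set.mem_setOf_eq, G.t_bar] using ha
    rw [heq]
    exact (G.out_fin u).image _
  -- Step F : vertex sums vanish
  have hF : ∀ u, ∑ᶠ a ∈ {a : G.A | G.o a = u}, (Real.sqrt (p a) : ℂ) * Ψ a = 0 := by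
    intro u
    have hbij : Set.BijOn G.bar {a : G.A | G.o a = u} {b : G.A | G.t b = u} := by
      refine ⟨fun a ha => by simpa [Set.mem_setOf_eq, G.t_bar] using ha, ?_, ?_⟩
      · intro a _ b _ hab
        have := congrArg G.bar hab
        rwa [G.bar_inv, G.bar_inv] at this
      · intro b hb
        exact ⟨G.bar b, by simpa [Set.mem_setOf_eq, G.o_bar] using hb, G.bar_inv b⟩
    have hre : ∑ᶠ a ∈ {a : G.A | G.o a = u}, (Real.sqrt (p a) : ℂ) * Ψ a
        = ∑ᶠ b ∈ {b : G.A | G.t b = u}, -((Real.sqrt (p (G.bar b)) : ℂ) * Ψ b) := by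
      refine finsum_mem_eq_of_bijOn G.bar hbij ?_
      intro a _
      rw [hanti a]
      ring_nf
      rw [G.bar_inv]
      ring
    have hρ : ∑ᶠ b ∈ {b : G.A | G.t b = u}, ((Real.sqrt (p (G.bar b)) : ℂ) * Ψ b) = 0 := hD u
    rw [hre]
    have := finsum_mem_eq_finite_toFinset_sum
      (fun b => -((Real.sqrt (p (G.bar b)) : ℂ) * Ψ b)) (hin_fin u)
    rw [this, Finset.sum_neg_distrib, ← finsum_mem_eq_finite_toFinset_sum _ (hin_fin u), hρ,
      neg_zero]
  -- edge measure positivity and symmetry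
  have hmpos : ∀ a, 0 < mEdge G.toSymDigraph p mV a := fun a =>
    mul_pos (hppos a) (hrev.1 _)
  have hmsym : ∀ a, mEdge G.toSymDigraph p mV (G.bar a) = mEdge G.toSymDigraph p mV a := by
    intro a
    unfold mEdge
    rw [G.o_bar]
    exact (hrev.2 a).symm
  set f : G.A → ℂ := fun a => (Real.sqrt (mEdge G.toSymDigraph p mV a) : ℂ) * Ψ a with hf
  have hfbar : ∀ a, f (G.bar a) = -f a := by
    intro a
    simp only [hf, hmsym a, hanti a]
    ring
  -- per-vertex sums of f vanish
  have hFv : ∀ u, ∑ᶠ a ∈ {a : G.A | G.o a = u}, f a = 0 := by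
    intro u
    have hconv := finsum_mem_eq_finite_toFinset_sum f (G.out_fin u)
    rw [hconv]
    have heach : ∀ a ∈ (G.out_fin u).toFinset, f a
        = (Real.sqrt (mV u) : ℂ) * ((Real.sqrt (p a) : ℂ) * Ψ a) := by
      intro a ha
      have hoa : G.o a = u := by simpa using ha
      simp only [hf]
      unfold mEdge
      rw [hoa, Real.sqrt_mul (hppos a).le]
      push_cast
      ring
    rw [Finset.sum_congr rfl heach, ← Finset.mul_sum,
      ← finsum_mem_eq_finite_toFinset_sum _ (G.out_fin u), hF u, mul_zero]
  -- the set of arcs with origin in V0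
  have hSeq : {a : G.A | G.o a ∈ G.V0} = ⋃ u ∈ G.V0, {a : G.A | G.o a = u} := by
    ext a
    simp only [Set.mem_setOf_eq, Set.mem_iUnion]
    constructor
    · intro h; exact ⟨G.o a, h, rfl⟩
    · rintro ⟨u, hu, rfl⟩; exact hu
  have hdisj : G.V0.PairwiseDisjoint (fun u => {a : G.A | G.o a = u}) := by
    intro u _ v _ huv
    refine Set.disjoint_left.mpr ?_
    intro a ha hb
    exact huv (ha.symm.trans hb)
  have hsum0 : ∑ᶠ a ∈ {a : G.A | G.o a ∈ G.V0}, f a = 0 := by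
    rw [hSeq, finsum_mem_biUnion hdisj G.V0_fin (fun u _ => G.out_fin u)]
    rw [finsum_mem_congr rfl (fun u _ => hFv u)]
    simp
  -- split the set
  have hSsplit : {a : G.A | G.o a ∈ G.V0}
      = G.A0 ∪ Set.range (fun j => G.bar (G.tailA j 0)) := by
    ext a
    simp only [Set.mem_setOf_eq, Set.mem_union, Set.mem_range]
    constructor
    · intro ha
      rcases G.arcs_cover a with h | ⟨j, k, h | h⟩
      · exact Or.inl h
      · exfalso
        rw [h, G.tailA_o] at ha
        exact G.tailV_notin j k ha
      · rw [h, G.o_bar, G.tailA_t] at ha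
        cases k with
        | zero => exact Or.inr ⟨j, h.symm⟩
        | succ k => exact absurd ha (G.tailV_notin j k)
    · rintro (h | ⟨j, rfl⟩)
      · exact (G.A0_ends a h).1
      · rw [G.o_bar, G.tailA_t]
        exact G.tailV_root j
  have hdisj2 : Disjoint G.A0 (Set.range fun j => G.bar (G.tailA j 0)) := by
    refine Set.disjoint_left.mpr ?_
    rintro a ha ⟨j, rfl⟩
    have h2 := G.A0_bar _ ha
    rw [G.bar_inv] at h2
    exact G.tailA_nin j 0 h2
  have hinj : Function.Injective (fun j => G.bar (G.tailA j 0)) := by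
    intro j j' h
    have h2 : G.tailA j 0 = G.tailA j' 0 := by
      have := congrArg G.bar h
      rwa [G.bar_inv, G.bar_inv] at this
    have h3 : G.tailV j 1 = G.tailV j' 1 := by
      rw [← G.tailA_o j 0, ← G.tailA_o j' 0, h2]
    exact (G.tailV_inj j 0 j' 0 h3).1
  -- sum over A0 vanishes by antisymmetry
  have hA0sum : ∑ᶠ a ∈ G.A0, f a = 0 := by
    have hbijA0 : Set.BijOn G.bar G.A0 G.A0 := by
      refine ⟨fun a ha => G.A0_bar a ha, ?_, ?_⟩
      · intro a _ b _ hab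
        have := congrArg G.bar hab
        rwa [G.bar_inv, G.bar_inv] at this
      · intro b hb
        exact ⟨G.bar b, G.A0_bar b hb, G.bar_inv b⟩
    have h1 : ∑ᶠ a ∈ G.A0, f a = ∑ᶠ a ∈ G.A0, -(f a) := by
      refine finsum_mem_eq_of_bijOn G.bar hbijA0 ?_
      intro a _
      rw [hfbar a, neg_neg]
    have h2 : ∑ᶠ a ∈ G.A0, -(f a) = -∑ᶠ a ∈ G.A0, f a := by
      rw [finsum_mem_eq_finite_toFinset_sum _ G.A0_fin,
        finsum_mem_eq_finite_toFinset_sum _ G.A0_fin, Finset.sum_neg_distrib]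
    have h3 := h1.trans h2
    have : (2 : ℂ) * ∑ᶠ a ∈ G.A0, f a = 0 := by linear_combination h3
    simpa using this
  -- hence the boundary sum vanishes
  have hrange : ∑ᶠ a ∈ Set.range (fun j => G.bar (G.tailA j 0)), f a
      = ∑ j : Fin G.r, f (G.bar (G.tailA j 0)) := by
    rw [finsum_mem_range hinj, finsum_eq_sum_of_fintype]
  have hbdry : ∑ j : Fin G.r,
      (Real.sqrt (mEdge G.toSymDigraph p mV (G.tailA j 0)) : ℂ) * α j = 0 := by
    have hsplit := hsum0
    rw [hSsplit, finsum_mem_union hdisj2 G.A0_fin (Set.finite_range _), hA0sum, zero_add,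
      hrange] at hsplit
    have heach : ∀ j : Fin G.r, f (G.bar (G.tailA j 0))
        = -((Real.sqrt (mEdge G.toSymDigraph p mV (G.tailA j 0)) : ℂ) * α j) := by
      intro j
      simp only [hf, hmsym, hΨ.2.2 j 0, hβ j]
      ring
    rw [Finset.sum_congr rfl (fun j _ => heach j), Finset.sum_neg_distrib] at hsplit
    simpa using hsplit
  -- contradiction with hinner
  have hmδ : 0 < mDelta G p mV := by
    unfold mDelta
    refine Finset.sum_pos (fun j _ => hmpos _) ?_
    exact Finset.univ_nonempty_iff.mpr ⟨⟨0, G.r_pos⟩⟩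
  apply hinner
  unfold bdryInner
  have hterm : ∀ j : Fin G.r,
      (Real.sqrt (mEdge G.toSymDigraph p mV (G.tailA j 0) / mDelta G p mV) : ℂ) * α j
      = ((Real.sqrt (mDelta G p mV) : ℂ))⁻¹
        * ((Real.sqrt (mEdge G.toSymDigraph p mV (G.tailA j 0)) : ℂ) * α j) := by
    intro j
    rw [Real.sqrt_div (hmpos (G.tailA j 0)).le]
    push_cast
    field_simp
  rw [Finset.sum_congr rfl (fun j _ => hterm j), ← Finset.mul_sum, hbdry, mul_zero]

end Proof
/-- for a reversible walk with `⟨m_{δE}, α⟩ ≠ 0` and nonempty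
`A0`, a quantum walker either penetrates some edge of the internal graph or
all of them: (∃ a ∈ A0, Ψ(a) ≠ 0 ∨ Ψ(ā) ≠ 0) ↔ (∀ a ∈ A0, Ψ(a) ≠ 0 ∨ Ψ(ā) ≠ 0). -/
theorem penetration_dichotomy (G : TailedGraph) (p : G.A → ℝ)
    (hp : TailTransition G p) (mV : G.V → ℝ)
    (hrev : IsReversible G.toSymDigraph p mV)
    (Ψ : G.A → ℂ) (α β : Fin G.r → ℂ) (hΨ : IsStationaryState G p Ψ α β)
    (hA0 : G.A0.Nonempty) (hinner : bdryInner G p mV α ≠ 0) :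
    (∃ a ∈ G.A0, Ψ a ≠ 0 ∨ Ψ (G.bar a) ≠ 0) ↔
      ∀ a ∈ G.A0, Ψ a ≠ 0 ∨ Ψ (G.bar a) ≠ 0 := by
  have H := key_zero G p mV Ψ hp hrev α β hΨ hinner
  constructor
  · intro _ a _
    exact H a
  · intro _
    obtain ⟨a, ha⟩ := hA0
    exact ⟨a, ha, H a⟩
end

section
/- Suppose p is reversible, r = 2, and the two tails are attached to the same vertex u* ∈ V0 (o(P_1) = o(P_2) = u*). If the inflow amplitudes are α_1 = √(m_E(|e_2|)) and α_2 = −√(m_E(|e_1|)), then the walk never penetrates the internal graph: Ψ_n(a) = 0 for every n ≥ 0 and every arc a ∈ A0. -/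
open scoped BigOperators

section Aux

/-- Arcs with terminus at an interior tail vertex: exactly the next inward
arc and the bar of the previous inward arc. -/
lemma tail_interior_preimage (G : TailedGraph) (j : Fin G.r) (k : ℕ) :
    {b : G.A | G.t b = G.tailV j (k + 1)} =
      {G.tailA j (k + 1), G.bar (G.tailA j k)} := by
  ext b
  simp only [Set.mem_setOf_eq, Set.mem_insert_iff, Set.mem_singleton_iff]
  constructor
  · intro hb
    rcases G.arcs_cover b with hA | ⟨j', k', (rfl | rfl)⟩
    · exact absurd (hb ▸ (G.A0_ends b hA).2) (G.tailV_notin j k)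
    · rw [G.tailA_t] at hb
      cases k' with
      | zero => exact absurd (hb ▸ G.tailV_root j') (G.tailV_notin j k)
      | succ m =>
          obtain ⟨rfl, rfl⟩ := G.tailV_inj j' m j k hb
          exact Or.inl rfl
    · rw [G.t_bar, G.tailA_o] at hb
      obtain ⟨rfl, rfl⟩ := G.tailV_inj j' k' j k hb
      exact Or.inr rfl
  · rintro (rfl | rfl)
    · exact G.tailA_t j (k + 1)
    · rw [G.t_bar, G.tailA_o]

lemma tailA_ne_bar (G : TailedGraph) (j : Fin G.r) (k : ℕ) :
    G.tailA j (k + 1) ≠ G.bar (G.tailA j k) := by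
  intro h
  have h' := congrArg G.o h
  rw [G.tailA_o, G.o_bar, G.tailA_t] at h'
  cases k with
  | zero => exact G.tailV_notin j 1 (h' ▸ G.tailV_root j)
  | succ m =>
      obtain ⟨-, hk⟩ := G.tailV_inj j (m + 1 + 1) j m h'
      omega

lemma tailA_root_ne (G : TailedGraph) {j₁ j₂ : Fin G.r} (hj : j₁ ≠ j₂) :
    G.tailA j₁ 0 ≠ G.tailA j₂ 0 := by
  intro h
  have h' := congrArg G.o h
  rw [G.tailA_o, G.tailA_o] at h'
  exact hj (G.tailV_inj j₁ 0 j₂ 0 h').1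

/-- Under the invariant, the vertex amplitude vanishes at every internal
vertex. -/
lemma rhoV_zero (G : TailedGraph) (p : G.A → ℝ)
    (hp : TailTransition G p) (mV : G.V → ℝ)
    (hrev : IsReversible G.toSymDigraph p mV)
    (hr : G.r = 2) (j₁ j₂ : Fin G.r) (hj : j₁ ≠ j₂)
    (hroot : G.tailV j₁ 0 = G.tailV j₂ 0) (α : Fin G.r → ℂ)
    (hα₁ : α j₁ = (Real.sqrt (mEdge G.toSymDigraph p mV (G.tailA j₂ 0)) : ℂ))
    (hα₂ : α j₂ = -(Real.sqrt (mEdge G.toSymDigraph p mV (G.tailA j₁ 0)) : ℂ))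
    (Ψ : G.A → ℂ) (hA0 : ∀ a ∈ G.A0, Ψ a = 0)
    (hin : ∀ j k, Ψ (G.tailA j k) = α j)
    (v : G.V) (hv : v ∈ G.V0) :
    (∑ᶠ b ∈ {b : G.A | G.t b = v}, ((Real.sqrt (p (G.bar b)) : ℂ) * Ψ b)) = 0 := by
  classical
  have hall : ∀ j : Fin G.r, j = j₁ ∨ j = j₂ := by
    intro j
    have h1 : (j : ℕ) < G.r := j.isLt
    have h2 : (j₁ : ℕ) < G.r := j₁.isLt
    have h3 : (j₂ : ℕ) < G.r := j₂.isLt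
    have h4 : (j₁ : ℕ) ≠ (j₂ : ℕ) := fun h => hj (Fin.ext h)
    have : (j : ℕ) = (j₁ : ℕ) ∨ (j : ℕ) = (j₂ : ℕ) := by omega
    exact this.imp Fin.ext Fin.ext
  set f : G.A → ℂ := fun b => (Real.sqrt (p (G.bar b)) : ℂ) * Ψ b with hf
  -- classification of arcs with terminus in V0 supporting f
  have hclass : ∀ b : G.A, G.t b = v → f b ≠ 0 →
      (b = G.tailA j₁ 0 ∨ b = G.tailA j₂ 0) ∧ v = G.tailV j₁ 0 := by
    intro b hb hfb
    rcases G.arcs_cover b with hA | ⟨j', k', (rfl | rfl)⟩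
    · exact absurd (by simp [hf, hA0 b hA]) hfb
    · cases k' with
      | zero =>
          rcases hall j' with rfl | rfl
          · exact ⟨Or.inl rfl, by rw [← hb, G.tailA_t]⟩
          · exact ⟨Or.inr rfl, by rw [← hb, G.tailA_t, ← hroot]⟩
      | succ m =>
          rw [G.tailA_t] at hb
          exact absurd (hb ▸ hv) (G.tailV_notin j' m)
    · rw [G.t_bar, G.tailA_o] at hb
      exact absurd (hb ▸ hv) (G.tailV_notin j' k')
  by_cases hvu : v = G.tailV j₁ 0
  · subst hvu
    have hST : {b : G.A | G.t b = G.tailV j₁ 0} ∩ Function.support f =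
        ({G.tailA j₁ 0, G.tailA j₂ 0} : Set G.A) ∩ Function.support f := by
      ext b
      simp only [Set.mem_inter_iff, Set.mem_setOf_eq, Function.mem_support,
        Set.mem_insert_iff, Set.mem_singleton_iff]
      constructor
      · rintro ⟨hb, hfb⟩
        exact ⟨(hclass b hb hfb).1, hfb⟩
      · rintro ⟨(rfl | rfl), hfb⟩
        · exact ⟨G.tailA_t j₁ 0, hfb⟩
        · exact ⟨by rw [G.tailA_t, ← hroot], hfb⟩
    rw [finsum_mem_inter_support_eq f _ _ hST,
      finsum_mem_pair (tailA_root_ne G hj)]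
    -- now the explicit cancellation
    have hq₁ : (0:ℝ) ≤ p (G.bar (G.tailA j₁ 0)) := (hp.1.1 _).1.le
    have hq₂ : (0:ℝ) ≤ p (G.bar (G.tailA j₂ 0)) := (hp.1.1 _).1.le
    have hme : ∀ j : Fin G.r, mEdge G.toSymDigraph p mV (G.tailA j 0) =
        p (G.bar (G.tailA j 0)) * mV (G.tailV j 0) := by
      intro j
      have := hrev.2 (G.tailA j 0)
      rw [G.tailA_t] at this
      simpa [mEdge] using this
    have hme₁ : mEdge G.toSymDigraph p mV (G.tailA j₁ 0) =
        p (G.bar (G.tailA j₁ 0)) * mV (G.tailV j₁ 0) := hme j₁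
    have hme₂ : mEdge G.toSymDigraph p mV (G.tailA j₂ 0) =
        p (G.bar (G.tailA j₂ 0)) * mV (G.tailV j₁ 0) := by
      rw [hme j₂, ← hroot]
    simp only [hf, hin j₁ 0, hin j₂ 0, hα₁, hα₂, hme₁, hme₂,
      Real.sqrt_mul hq₁, Real.sqrt_mul hq₂]
    push_cast
    ring
  · apply finsum_mem_eq_zero_of_forall_eq_zero
    intro b hb
    by_contra hfb
    exact hvu (hclass b hb hfb).2

/-- One step of the evolution preserves the invariant. -/
lemma step_inv (G : TailedGraph) (p : G.A → ℝ)
    (hp : TailTransition G p) (mV : G.V → ℝ)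
    (hrev : IsReversible G.toSymDigraph p mV)
    (hr : G.r = 2) (j₁ j₂ : Fin G.r) (hj : j₁ ≠ j₂)
    (hroot : G.tailV j₁ 0 = G.tailV j₂ 0) (α : Fin G.r → ℂ)
    (hα₁ : α j₁ = (Real.sqrt (mEdge G.toSymDigraph p mV (G.tailA j₂ 0)) : ℂ))
    (hα₂ : α j₂ = -(Real.sqrt (mEdge G.toSymDigraph p mV (G.tailA j₁ 0)) : ℂ))
    (Ψ : G.A → ℂ) (hA0 : ∀ a ∈ G.A0, Ψ a = 0)
    (hin : ∀ j k, Ψ (G.tailA j k) = α j) :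
    (∀ a ∈ G.A0, szegedy G.toSymDigraph p Ψ a = 0) ∧
      (∀ j k, szegedy G.toSymDigraph p Ψ (G.tailA j k) = α j) := by
  have hrho := rhoV_zero G p hp mV hrev hr j₁ j₂ hj hroot α hα₁ hα₂ Ψ hA0 hin
  constructor
  · intro a ha
    simp only [szegedy]
    rw [hrho (G.o a) (G.A0_ends a ha).1, hA0 (G.bar a) (G.A0_bar a ha)]
    ring
  · intro j k
    simp only [szegedy]
    rw [G.tailA_o, tail_interior_preimage G j k,
      finsum_mem_pair (tailA_ne_bar G j k), G.bar_inv (G.tailA j k),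
      hp.2.1 j k, hp.2.2 j k, hin j (k + 1)]
    have hs : (Real.sqrt (1 / 2) : ℂ) * (Real.sqrt (1 / 2) : ℂ) = 1 / 2 := by
      rw [← Complex.ofReal_mul, Real.mul_self_sqrt (by norm_num)]
      norm_num
    linear_combination (2 * α j + 2 * Ψ (G.bar (G.tailA j k))) * hs

end Aux

/-- with `r = 2` tails attached to the same vertex and inflow
amplitudes `α_1 = √(m_E(|e_2|))`, `α_2 = −√(m_E(|e_1|))`, the walk never
penetrates the internal graph: `Ψ_n(a) = 0` on `A0` for all `n`. -/
theorem no_penetration_example (G : TailedGraph) (p : G.A → ℝ)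
    (hp : TailTransition G p) (mV : G.V → ℝ)
    (hrev : IsReversible G.toSymDigraph p mV)
    (hr : G.r = 2) (j₁ j₂ : Fin G.r) (hj : j₁ ≠ j₂)
    (hroot : G.tailV j₁ 0 = G.tailV j₂ 0)
    (α : Fin G.r → ℂ) (Ψ : ℕ → G.A → ℂ)
    (h0in : ∀ j k, Ψ 0 (G.tailA j k) = α j)
    (h0out : ∀ a : G.A, (∀ j k, a ≠ G.tailA j k) → Ψ 0 a = 0)
    (hstep : ∀ n, Ψ (n + 1) = szegedy G.toSymDigraph p (Ψ n))
    (hα₁ : α j₁ = (Real.sqrt (mEdge G.toSymDigraph p mV (G.tailA j₂ 0)) : ℂ))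
    (hα₂ : α j₂ = -(Real.sqrt (mEdge G.toSymDigraph p mV (G.tailA j₁ 0)) : ℂ)) :
    ∀ (n : ℕ), ∀ a ∈ G.A0, Ψ n a = 0 := by
  have key : ∀ n, (∀ a ∈ G.A0, Ψ n a = 0) ∧ (∀ j k, Ψ n (G.tailA j k) = α j) := by
    intro n
    induction n with
    | zero =>
        refine ⟨fun a ha => h0out a fun j k h => G.tailA_nin j k (h ▸ ha), h0in⟩
    | succ n ih =>
        rw [hstep n]
        exact step_inv G p hp mV hrev hr j₁ j₂ hj hroot α hα₁ hα₂ (Ψ n) ih.1 ih.2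
  exact fun n a ha => (key n).1 a ha
end
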